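/- The elements α₁ = −h + l₁ + l₂ + l₃ and αᵢ = lᵢ − lᵢ₋₁ for 2 ≤ i ≤ n form a ℤ-basis of the sublattice {v ∈ L : B(v,K) = 0 and B(v,C) = 0} of L, and the Gram matrix of −B on this basis is the Cartan matrix of type Eₙ; explicitly, −B(αᵢ,αᵢ) = 2 for all i, −B(α₁,α₄) = −B(α₄,α₁) = −1, −B(αᵢ,αᵢ₊₁) = −B(αᵢ₊₁,αᵢ) = −1 for 2 ≤ i ≤ n−1, and −B(αᵢ,αⱼ) = 0 for all other pairs i ≠ j. -/

import Mathlib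

noncomputable section
namespace ADEPaper

/-- The Picard lattice `L = ℤ^{n+2}` with basis `h = e 0`, `lᵢ = e i` for `1 ≤ i ≤ n+1`. -/
abbrev L (n : ℕ) : Type := Fin (n + 2) → ℤ

/-- The intersection form: `B(h,h) = 1`, `B(lᵢ,lᵢ) = -1`, distinct basis vectors orthogonal. -/
def B (n : ℕ) (v w : L n) : ℤ :=
  v 0 * w 0 - ∑ i : Fin (n + 1), v i.succ * w i.succ

/-- The canonical class `K = -3h + l₁ + ⋯ + l_{n+1}`. -/
def K (n : ℕ) : L n := fun j => if j = 0 then -3 else 1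

/-- The exceptional class `l i` here denotes `l_{i+1}` of the paper, `i : Fin (n+1)`. -/
def l (n : ℕ) (i : Fin (n + 1)) : L n := fun j => if j = i.succ then 1 else 0

/-- `C = l_{n+1}`, the exceptional curve of the `Eₙ`-surface. -/
def C (n : ℕ) : L n := l n (Fin.last n)

/-- The simple roots: `α 0 = α₁ = -h + l₁ + l₂ + l₃` and `α i = α_{i+1} = l_{i+1} - l_i`
for `1 ≤ i ≤ n - 1` (the index `i : Fin n` corresponds to the paper's index `i + 1`). -/
def α (n : ℕ) (i : Fin n) : L n :=
  if (i : ℕ) = 0 then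
    fun k => if (k : ℕ) = 0 then -1 else if (k : ℕ) ≤ 3 then 1 else 0
  else
    fun k => if (k : ℕ) = (i : ℕ) + 1 then 1 else if (k : ℕ) = (i : ℕ) then -1 else 0

/-!
Write `v₀, …, v_{n+1}` for the coordinates of `v : L n` (`v₀` along `h`), so that
`α 0 = -e₀ + e₁ + e₂ + e₃` and `α i = e_{i+1} - e_i` for `i ≠ 0`. Orthogonality to `K` and `C`
and the Cartan entries follow from these expansions by bilinearity.

For the basis claim, the suffix sums `s_m(v) = ∑_{k ≥ m} v_k` satisfy `s_{j+1}(α i) = δ_{ij}` for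
`i, j ≠ 0`, while only `α 0` has a nonzero `h`-coordinate. Hence `coord 0 v = -v₀` and
`coord j v = s_{j+1}(v + v₀ • α 0)` recover the coefficients of any combination of the roots.
Conversely, if `w ∈ K^⊥ ∩ C^⊥` has all these coordinates zero, then `w₀ = 0`, `s₁(w) = 0`
(from `K`), `s_{n+1}(w) = 0` (from `C`) and `s₂(w) = ⋯ = s_n(w) = 0`, so `w = 0` by telescoping.
-/

def Bₗ (n : ℕ) : L n →ₗ[ℤ] L n →ₗ[ℤ] ℤ :=
  LinearMap.mk₂ ℤ (B n)
    (fun v v' w => by simp only [B, Pi.add_apply, add_mul, Finset.sum_add_distrib]; ring)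
    (fun c v w => by simp only [B, Pi.smul_apply, smul_eq_mul, Finset.mul_sum, mul_assoc, mul_sub])
    (fun v w w' => by simp only [B, Pi.add_apply, mul_add, Finset.sum_add_distrib]; ring)
    (fun c v w => by
      simp only [B, Pi.smul_apply, smul_eq_mul, Finset.mul_sum, mul_left_comm, mul_sub])

theorem Bₗ_apply (n : ℕ) (v w : L n) : Bₗ n v w = B n v w := rfl

def perpKC (n : ℕ) : Submodule ℤ (L n) :=
  LinearMap.ker ((Bₗ n).flip (K n)) ⊓ LinearMap.ker ((Bₗ n).flip (C n))

theorem mem_perpKC {n : ℕ} {v : L n} :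
    v ∈ perpKC n ↔ B n v (K n) = 0 ∧ B n v (C n) = 0 :=
  Iff.rfl

theorem B_single_left {n : ℕ} (a : Fin (n + 2)) (w : L n) :
    B n (Pi.single a 1) w = if a = 0 then w 0 else -w a := by
  cases a using Fin.cases with
  | zero => simp [B]
  | succ a => simp [B, Pi.single_apply, Fin.succ_ne_zero]

theorem α_apply_zero {n : ℕ} (i : Fin n) : α n i 0 = if (i : ℕ) = 0 then -1 else 0 := by
  by_cases hi : (i : ℕ) = 0
  · simp [α, hi]
  · simp [α, hi, Ne.symm hi]

theorem α_eq_of_val_eq_zero {n : ℕ} (hn : 2 ≤ n) {i : Fin n} (hi : (i : ℕ) = 0) :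
    α n i = -Pi.single 0 1 + Pi.single ⟨1, by omega⟩ 1 + Pi.single ⟨2, by omega⟩ 1 +
      Pi.single ⟨3, by omega⟩ 1 := by
  funext k
  simp only [α, ↓reduceIte, hi, Pi.add_apply, Pi.neg_apply, Pi.single_apply,
    Fin.ext_iff, Fin.val_zero]
  split_ifs <;> omega

theorem α_eq_of_val_ne_zero {n : ℕ} {i : Fin n} (hi : (i : ℕ) ≠ 0) :
    α n i = Pi.single ⟨i + 1, by omega⟩ 1 - Pi.single ⟨i, by omega⟩ 1 := by
  funext k
  simp only [α, hi, ↓reduceIte, Pi.sub_apply, Pi.single_apply, Fin.ext_iff]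
  split_ifs <;> omega

theorem B_α_left_of_val_eq_zero {n : ℕ} (hn : 2 ≤ n) {i : Fin n} (hi : (i : ℕ) = 0)
    (w : L n) :
    B n (α n i) w = -(w 0 + w ⟨1, by omega⟩ + w ⟨2, by omega⟩ + w ⟨3, by omega⟩) := by
  rw [α_eq_of_val_eq_zero hn hi, ← Bₗ_apply]
  simp only [map_add, map_neg, LinearMap.add_apply, LinearMap.neg_apply, Bₗ_apply, B_single_left]
  simp [Fin.ext_iff]
  ring

theorem B_α_left_of_val_ne_zero {n : ℕ} {i : Fin n} (hi : (i : ℕ) ≠ 0) (w : L n) :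
    B n (α n i) w = w ⟨i, by omega⟩ - w ⟨i + 1, by omega⟩ := by
  rw [α_eq_of_val_ne_zero hi, ← Bₗ_apply]
  simp only [map_sub, LinearMap.sub_apply, Bₗ_apply, B_single_left]
  simp [Fin.ext_iff, hi]
  ring

theorem α_mem_perpKC {n : ℕ} (hn : 3 ≤ n) (i : Fin n) : α n i ∈ perpKC n := by
  rw [mem_perpKC]
  by_cases hi : (i : ℕ) = 0
  · simp [B_α_left_of_val_eq_zero (by omega) hi, K, C, l, Fin.ext_iff]
    omega
  · simp [B_α_left_of_val_ne_zero hi, K, C, l, Fin.ext_iff]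
    omega

def cartanE (n : ℕ) : Matrix (Fin n) (Fin n) ℤ :=
  Matrix.of fun i j =>
    if i = j then 2
    else if ((i : ℕ) = 0 ∧ (j : ℕ) = 3) ∨ ((i : ℕ) = 3 ∧ (j : ℕ) = 0) ∨
        (1 ≤ (i : ℕ) ∧ (j : ℕ) = i + 1) ∨ (1 ≤ (j : ℕ) ∧ (i : ℕ) = j + 1) then -1
    else 0

theorem neg_B_α_α {n : ℕ} (hn : 2 ≤ n) (i j : Fin n) :
    -B n (α n i) (α n j) = cartanE n i j := by
  have hj := j.isLt
  by_cases hi : (i : ℕ) = 0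
  · rw [B_α_left_of_val_eq_zero hn hi]
    simp only [α, ite_apply, cartanE, Matrix.of_apply, Fin.ext_iff, Fin.val_zero, hi]
    norm_num
    split_ifs <;> omega
  · rw [B_α_left_of_val_ne_zero hi]
    simp only [α, ite_apply, cartanE, Matrix.of_apply, Fin.ext_iff]
    norm_num
    split_ifs <;> omega

def suffixSum (n m : ℕ) : L n →ₗ[ℤ] ℤ where
  toFun v := ∑ k : Fin (n + 2), if m ≤ (k : ℕ) then v k else 0
  map_add' v w := by
    rw [← Finset.sum_add_distrib]
    exact Finset.sum_congr rfl fun k _ => by split_ifs <;> simp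
  map_smul' c v := by
    simp only [Finset.smul_sum, Pi.smul_apply, RingHom.id_apply, smul_ite, smul_zero]

theorem suffixSum_apply (n m : ℕ) (v : L n) :
    suffixSum n m v = ∑ k : Fin (n + 2), if m ≤ (k : ℕ) then v k else 0 := rfl

theorem suffixSum_single {n : ℕ} (m : ℕ) (a : Fin (n + 2)) :
    suffixSum n m (Pi.single a 1) = if m ≤ (a : ℕ) then 1 else 0 := by
  rw [suffixSum_apply, Finset.sum_eq_single a (fun k _ hk => by simp [hk]) (by simp)]
  simp

theorem suffixSum_sub_suffixSum_succ {n : ℕ} (v : L n) (k : Fin (n + 2)) :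
    suffixSum n k v - suffixSum n (k + 1) v = v k := by
  rw [suffixSum_apply, suffixSum_apply, ← Finset.sum_sub_distrib, Finset.sum_eq_single k]
  · simp
  · intro x _ hx
    have := Fin.val_ne_of_ne hx
    split_ifs <;> omega
  · simp

theorem suffixSum_eq_zero_of_le {n m : ℕ} (h : n + 2 ≤ m) (v : L n) : suffixSum n m v = 0 :=
  Finset.sum_eq_zero (s := Finset.univ)
    (f := fun k : Fin (n + 2) => if m ≤ (k : ℕ) then v k else 0)
    fun k _ => if_neg (by have := k.isLt; omega)

theorem suffixSum_last (n : ℕ) (v : L n) : suffixSum n (n + 1) v = v (Fin.last (n + 1)) := by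
  rw [suffixSum_apply, Finset.sum_eq_single (Fin.last (n + 1))]
  · simp
  · intro k _ hk
    have := Fin.val_ne_of_ne hk
    rw [Fin.val_last] at this
    exact if_neg (by have := k.isLt; omega)
  · simp

theorem B_K {n : ℕ} (v : L n) : B n v (K n) = -3 * v 0 - suffixSum n 1 v := by
  simp [B, K, suffixSum_apply, Fin.sum_univ_succ, Fin.succ_ne_zero]
  ring

theorem B_C {n : ℕ} (v : L n) : B n v (C n) = -suffixSum n (n + 1) v := by
  rw [suffixSum_last]
  simp [B, C, l]

theorem eq_zero_of_suffixSum_eq_zero {n : ℕ} {v : L n} (h0 : v 0 = 0)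
    (hs : ∀ m, 1 ≤ m → suffixSum n m v = 0) : v = 0 := by
  funext k
  by_cases hk : k = 0
  · rw [hk, h0, Pi.zero_apply]
  · have hk' : 1 ≤ (k : ℕ) := Nat.one_le_iff_ne_zero.mpr (Fin.val_ne_of_ne hk)
    rw [← suffixSum_sub_suffixSum_succ v k, hs _ hk', hs _ (by omega), sub_zero, Pi.zero_apply]

def coord (n : ℕ) (j : Fin n) : L n →ₗ[ℤ] ℤ :=
  if (j : ℕ) = 0 then -LinearMap.proj 0
  else suffixSum n (j + 1) + suffixSum n (j + 1) (α n ⟨0, j.pos⟩) • LinearMap.proj 0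

theorem coord_α {n : ℕ} (i j : Fin n) : coord n j (α n i) = if i = j then 1 else 0 := by
  by_cases hj : (j : ℕ) = 0
  · simp only [coord, hj, ↓reduceIte, LinearMap.neg_apply, LinearMap.proj_apply, α_apply_zero,
      Fin.ext_iff]
    split_ifs <;> simp
  by_cases hi : (i : ℕ) = 0
  · obtain rfl : i = ⟨0, j.pos⟩ := Fin.ext hi
    simp [coord, hj, α_apply_zero, Fin.ext_iff]
    omega
  · simp only [coord, hj, ↓reduceIte, LinearMap.add_apply, LinearMap.smul_apply,
      LinearMap.proj_apply, α_apply_zero, hi, smul_zero, add_zero]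
    rw [α_eq_of_val_ne_zero hi, map_sub, suffixSum_single, suffixSum_single]
    simp only [Fin.ext_iff]
    split_ifs <;> omega

theorem coord_sum_smul_α {n : ℕ} (c : Fin n → ℤ) (j : Fin n) :
    coord n j (∑ i, c i • α n i) = c j := by
  simp only [map_sum, map_smul, coord_α, smul_eq_mul, mul_ite, mul_one, mul_zero,
    Finset.sum_ite_eq', Finset.mem_univ, if_true]

theorem eq_zero_of_mem_perpKC_of_coord_eq_zero {n : ℕ} (hn : 0 < n) {v : L n}
    (hv : v ∈ perpKC n) (hc : ∀ j, coord n j v = 0) : v = 0 := by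
  obtain ⟨hK, hC⟩ := mem_perpKC.mp hv
  have h0 : v 0 = 0 := by simpa [coord] using hc ⟨0, hn⟩
  refine eq_zero_of_suffixSum_eq_zero h0 fun m hm => ?_
  rcases (show m = 1 ∨ (2 ≤ m ∧ m ≤ n) ∨ m = n + 1 ∨ n + 2 ≤ m by omega)
    with rfl | hm | rfl | hm
  · simpa [B_K, h0] using hK
  · simpa [coord, show m - 1 ≠ 0 by omega, Nat.sub_add_cancel (by omega : 1 ≤ m), h0] using
      hc ⟨m - 1, by omega⟩
  · simpa [B_C] using hC
  · exact suffixSum_eq_zero_of_le hm v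

theorem sum_coord_smul_α {n : ℕ} (hn : 3 ≤ n) {v : L n} (hv : v ∈ perpKC n) :
    ∑ i, coord n i v • α n i = v := by
  set w := v - ∑ i, coord n i v • α n i
  have hw : w ∈ perpKC n :=
    sub_mem hv (sum_mem fun i _ => Submodule.smul_mem _ _ (α_mem_perpKC hn i))
  have hcw : ∀ j, coord n j w = 0 := fun j => by rw [map_sub, coord_sum_smul_α, sub_self]
  exact (sub_eq_zero.mp (eq_zero_of_mem_perpKC_of_coord_eq_zero (by omega) hw hcw)).symm

theorem En_simple_roots_basis_and_cartan_general (n : ℕ) (hn : 4 ≤ n) :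
    (∀ i : Fin n, B n (α n i) (K n) = 0 ∧ B n (α n i) (C n) = 0) ∧
    (∀ v : L n, B n v (K n) = 0 → B n v (C n) = 0 →
      ∃! c : Fin n → ℤ, v = ∑ i : Fin n, c i • α n i) ∧
    (∀ i : Fin n, -B n (α n i) (α n i) = 2) ∧
    (∀ i j : Fin n, ((i : ℕ) = 0 ∧ (j : ℕ) = 3) ∨ ((i : ℕ) = 3 ∧ (j : ℕ) = 0) →
      -B n (α n i) (α n j) = -1) ∧
    (∀ i j : Fin n,
      (1 ≤ (i : ℕ) ∧ (j : ℕ) = (i : ℕ) + 1) ∨ (1 ≤ (j : ℕ) ∧ (i : ℕ) = (j : ℕ) + 1) →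
      -B n (α n i) (α n j) = -1) ∧
    (∀ i j : Fin n, i ≠ j →
      ¬(((i : ℕ) = 0 ∧ (j : ℕ) = 3) ∨ ((i : ℕ) = 3 ∧ (j : ℕ) = 0)) →
      ¬((1 ≤ (i : ℕ) ∧ (j : ℕ) = (i : ℕ) + 1) ∨ (1 ≤ (j : ℕ) ∧ (i : ℕ) = (j : ℕ) + 1)) →
      -B n (α n i) (α n j) = 0) := by
  have cartan := neg_B_α_α (n := n) (by omega)
  refine ⟨α_mem_perpKC (by omega), fun v hK hC => ?_, fun i => ?_, fun i j h => ?_,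
    fun i j h => ?_, fun i j hij h₁ h₂ => ?_⟩
  · refine ⟨fun i => coord n i v, (sum_coord_smul_α (by omega) ⟨hK, hC⟩).symm, fun c hc => ?_⟩
    funext j
    rw [hc, coord_sum_smul_α]
  all_goals rw [cartan, cartanE, Matrix.of_apply]
  · exact if_pos rfl
  · rw [if_neg (Fin.ne_of_val_ne (by omega)), if_pos (by tauto)]
  · rw [if_neg (Fin.ne_of_val_ne (by omega)), if_pos (by tauto)]
  · rw [if_neg hij, if_neg (by tauto)]

/-- The simple roots `α₁ = -h+l₁+l₂+l₃`, `αᵢ = lᵢ - l_{i-1}` (`2 ≤ i ≤ n`) form a ℤ-basis of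
the sublattice `{v ∈ L : B(v,K) = 0, B(v,C) = 0}`, and the Gram matrix of `-B` on this basis
is the Cartan matrix of type `Eₙ`. -/
theorem En_simple_roots_basis_and_cartan (n : ℕ) (hn : 4 ≤ n) (hn' : n ≤ 8) :
    (∀ i : Fin n, B n (α n i) (K n) = 0 ∧ B n (α n i) (C n) = 0) ∧
    (∀ v : L n, B n v (K n) = 0 → B n v (C n) = 0 →
      ∃! c : Fin n → ℤ, v = ∑ i : Fin n, c i • α n i) ∧
    (∀ i : Fin n, -B n (α n i) (α n i) = 2) ∧
    (∀ i j : Fin n, ((i : ℕ) = 0 ∧ (j : ℕ) = 3) ∨ ((i : ℕ) = 3 ∧ (j : ℕ) = 0) →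
      -B n (α n i) (α n j) = -1) ∧
    (∀ i j : Fin n,
      (1 ≤ (i : ℕ) ∧ (j : ℕ) = (i : ℕ) + 1) ∨ (1 ≤ (j : ℕ) ∧ (i : ℕ) = (j : ℕ) + 1) →
      -B n (α n i) (α n j) = -1) ∧
    (∀ i j : Fin n, i ≠ j →
      ¬(((i : ℕ) = 0 ∧ (j : ℕ) = 3) ∨ ((i : ℕ) = 3 ∧ (j : ℕ) = 0)) →
      ¬((1 ≤ (i : ℕ) ∧ (j : ℕ) = (i : ℕ) + 1) ∨ (1 ≤ (j : ℕ) ∧ (i : ℕ) = (j : ℕ) + 1)) →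
      -B n (α n i) (α n j) = 0) :=
  En_simple_roots_basis_and_cartan_general n hn

end ADEPaper
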